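/- Let k > 1 and let the set of students be partitioned into a set N of sincere students and a set M of sophisticated students. For any problem (P,≻,q) where all schools have a common priority order, the game (SD^k, P) has a unique Nash equilibrium outcome, namely the matching SD(P^k_N, P_M, ≻, q) (the serial dictatorship outcome where the constraint k is applied only to the sincere students' preferences): every Nash equilibrium (P_N, P'_M) of (SD^k, P) satisfies SD^k(P_N, P'_M, ≻, q) = SD(P^k_N, P_M, ≻, q), and such a Nash equilibrium exists. -/

import Mathlib

/-!
School choice framework following Bonkoungou–Nesterov,
"Reforms meet fairness concerns in school and college admissions".

Students `I` and schools `S` are finite types with `|I| > |S|`.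
A strict preference relation of a student over `S ∪ {∅}` is represented by a list
of `Option S` containing every element exactly once (earlier = more preferred);
`none` is the outside option.  A strict priority order of a school is a list of
`I` containing every student exactly once (earlier = higher priority).
-/

namespace SchoolChoice

variable {I S : Type*} [Fintype I] [DecidableEq I] [Fintype S] [DecidableEq S]

/-- `p` is a strict preference relation on `S ∪ {∅}`: a ranking list containing every
element of `Option S` exactly once. -/
def ValidPref (p : List (Option S)) : Prop := p.Nodup ∧ ∀ x : Option S, x ∈ p

/-- `pr` is a strict priority order: a ranking list containing every student exactly once. -/
def ValidPrio (pr : List I) : Prop := pr.Nodup ∧ ∀ i : I, i ∈ pr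

/-- `a` is strictly preferred to `b` under the preference relation `p`. -/
def prefLt (p : List (Option S)) (a b : Option S) : Prop := p.idxOf a < p.idxOf b

/-- `i` has strictly higher priority than `j` under the priority order `pr`. -/
def prioLt (pr : List I) (i j : I) : Prop := pr.idxOf i < pr.idxOf j

instance (p : List (Option S)) (a b : Option S) : Decidable (prefLt p a b) :=
  inferInstanceAs (Decidable (_ < _))

instance (pr : List I) (i j : I) : Decidable (prioLt pr i j) :=
  inferInstanceAs (Decidable (_ < _))

/-- The acceptable schools of `p` (those preferred to the outside option), in preference
order. -/
def acceptables (p : List (Option S)) : List S := (p.takeWhile Option.isSome).filterMap id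

/-- The truncation of `p` after its `k`-th acceptable school: the preference relation
listing, in the same order, only the `min k _` most-preferred acceptable schools of `p`,
all other schools being unacceptable (kept below `none` in their original order). -/
def truncate (p : List (Option S)) (k : ℕ) : List (Option S) :=
  ((acceptables p).take k).map some ++
    none :: p.filter (fun x => decide (x ≠ none ∧ x ∉ ((acceptables p).take k).map some))

/-- `μ` is a matching: it respects the capacities `q`. -/
def IsMatching (q : S → ℕ) (μ : I → Option S) : Prop :=
  ∀ s : S, (Finset.univ.filter (fun i => μ i = some s)).card ≤ q s

/-- The pair `(i, s)` blocks `μ` under the problem `(P, prio, q)`. -/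
def Blocks (P : I → List (Option S)) (prio : S → List I) (q : S → ℕ)
    (μ : I → Option S) (i : I) (s : S) : Prop :=
  prefLt (P i) (some s) (μ i) ∧
    ((Finset.univ.filter (fun j => μ j = some s)).card < q s ∨
      ∃ j : I, μ j = some s ∧ prioLt (prio s) i j)

/-- `i` is a blocking student for `μ` under `(P, prio, q)`. -/
def BlockingStudent (P : I → List (Option S)) (prio : S → List I) (q : S → ℕ)
    (μ : I → Option S) (i : I) : Prop :=
  ∃ s : S, Blocks P prio q μ i s

/-- `μ` is individually rational under `P`. -/
def IndividuallyRational (P : I → List (Option S)) (μ : I → Option S) : Prop :=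
  ∀ i : I, ¬ prefLt (P i) none (μ i)

/-- `μ` is stable at `(P, prio, q)`. -/
def IsStable (P : I → List (Option S)) (prio : S → List I) (q : S → ℕ)
    (μ : I → Option S) : Prop :=
  IndividuallyRational P μ ∧ ∀ i : I, ¬ BlockingStudent P prio q μ i

/-- The number of blocking students for `μ` under `(P, prio, q)`. -/
noncomputable def numBlocking (P : I → List (Option S)) (prio : S → List I) (q : S → ℕ)
    (μ : I → Option S) : ℕ :=
  {i : I | BlockingStudent P prio q μ i}.ncard

/-! ### The Gale–Shapley student-proposing deferred acceptance mechanism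

The state `σ : I → ℕ` records, for each student, how many of her acceptable schools
have already rejected her; she currently applies to the `σ i`-th school on her list
(if any).  At each round every school tentatively keeps the `q s` highest-priority
students among its current applicants and rejects the rest, who move on. -/

/-- The school student `i` currently applies to. -/
def daTarget (P : I → List (Option S)) (σ : I → ℕ) (i : I) : Option S :=
  (acceptables (P i))[σ i]?

/-- The students tentatively held by school `s`: the `q s` highest-priority current
applicants. -/
def daHeld (P : I → List (Option S)) (prio : S → List I) (q : S → ℕ)
    (σ : I → ℕ) (s : S) : List I :=
  ((prio s).filter (fun i => decide (daTarget P σ i = some s))).take (q s)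

/-- One round of deferred acceptance: every rejected student moves to her next choice. -/
def daStep (P : I → List (Option S)) (prio : S → List I) (q : S → ℕ)
    (σ : I → ℕ) : I → ℕ := fun i =>
  match daTarget P σ i with
  | none => σ i
  | some s => if i ∈ daHeld P prio q σ s then σ i else σ i + 1

/-- The Gale–Shapley (student-proposing deferred acceptance) mechanism.  Iterating the
round map `|I| * |S| + 1` times is guaranteed to reach the terminal state. -/
def GS (P : I → List (Option S)) (prio : S → List I) (q : S → ℕ) : I → Option S :=
  fun i =>
    let σ := (daStep P prio q)^[Fintype.card I * Fintype.card S + 1] (fun _ => 0)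
    match daTarget P σ i with
    | none => none
    | some s => if i ∈ daHeld P prio q σ s then some s else none

/-- The constrained Gale–Shapley mechanism `GS^k`. -/
def GSk (k : ℕ) (P : I → List (Option S)) (prio : S → List I) (q : S → ℕ) : I → Option S :=
  GS (fun i => truncate (P i) k) prio q

/-! ### The Boston (immediate acceptance) mechanism -/

/-- Round `t` of the Boston mechanism: each not-yet-accepted student applies to her
`t`-th ranked acceptable school (0-indexed), and each school permanently accepts, up to
its remaining capacity, its highest-priority new applicants. -/
def bostonRound (P : I → List (Option S)) (prio : S → List I) (q : S → ℕ)
    (μ : I → Option S) (t : ℕ) : I → Option S := fun i =>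
  match μ i with
  | some s => some s
  | none =>
    match (acceptables (P i))[t]? with
    | none => none
    | some s =>
      if i ∈ ((prio s).filter
            (fun j => decide (μ j = none ∧ (acceptables (P j))[t]? = some s))).take
          (q s - (Finset.univ.filter (fun j => μ j = some s)).card)
      then some s else none

/-- The Boston (immediate acceptance) mechanism. -/
def Boston (P : I → List (Option S)) (prio : S → List I) (q : S → ℕ) : I → Option S :=
  (List.range (Fintype.card S)).foldl (bostonRound P prio q) (fun _ => none)

/-- The constrained Boston mechanism `β^k`. -/
def Bostonk (k : ℕ) (P : I → List (Option S)) (prio : S → List I) (q : S → ℕ) :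
    I → Option S :=
  Boston (fun i => truncate (P i) k) prio q

/-! ### The first-preference-first mechanism -/

/-- The adjusted priority profile: each first-preference-first school (member of `fpf`)
ranks students first by the rank they assign to it under `P` (counting the ranking of the
outside option as well), ties broken by the original priority; equal-preference schools
keep their original priority. -/
def fpfPrio (fpf : Finset S) (P : I → List (Option S)) (prio : S → List I) : S → List I :=
  fun s =>
    if s ∈ fpf then
      (List.range (Fintype.card S + 1)).flatMap
        (fun r => (prio s).filter (fun i => decide ((P i).idxOf (some s) = r)))
    else prio s

/-- The first-preference-first mechanism with set `fpf` of first-preference-first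
schools: Gale–Shapley run on the adjusted priorities. -/
def FPF (fpf : Finset S) (P : I → List (Option S)) (prio : S → List I) (q : S → ℕ) :
    I → Option S :=
  GS P (fpfPrio fpf P prio) q

/-- The constrained first-preference-first mechanism `FPF^k`. -/
def FPFk (fpf : Finset S) (k : ℕ) (P : I → List (Option S)) (prio : S → List I)
    (q : S → ℕ) : I → Option S :=
  FPF fpf (fun i => truncate (P i) k) prio q

/-! ### Manipulation and equilibrium notions -/

/-- Student `i` is a manipulating student of the mechanism `φ` (with priorities and
capacities fixed) at the true profile `P`. -/
def ManipulatingStudent (φ : (I → List (Option S)) → I → Option S)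
    (P : I → List (Option S)) (i : I) : Prop :=
  ∃ Q : List (Option S), ValidPref Q ∧
    prefLt (P i) (φ (Function.update P i Q) i) (φ P i)

/-- The mechanism `φ` is not manipulable at `P`. -/
def NotManipulable (φ : (I → List (Option S)) → I → Option S)
    (P : I → List (Option S)) : Prop :=
  ∀ i : I, ¬ ManipulatingStudent φ P i

/-- `P'` is a Nash equilibrium of the game `(φ, P)` in which the sophisticated students
are the members of `M` (who may misreport, and best respond) and all other (sincere)
students report truthfully. -/
def NashEq (φ : (I → List (Option S)) → I → Option S) (P : I → List (Option S))
    (M : Finset I) (P' : I → List (Option S)) : Prop :=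
  (∀ i, ValidPref (P' i)) ∧ (∀ i ∉ M, P' i = P i) ∧
    ∀ i ∈ M, ∀ Q : List (Option S), ValidPref Q →
      ¬ prefLt (P i) (φ (Function.update P' i Q) i) (φ P' i)

/-! ### Semi-sophisticated students -/

/-- Student `i` is guaranteed her first choice `s`: `s` is her most-preferred acceptable
school and `i` is among the `q s` highest-priority students at `s`. -/
def GuaranteedFirstChoice (P : I → List (Option S)) (prio : S → List I) (q : S → ℕ)
    (i : I) (s : S) : Prop :=
  (acceptables (P i)).head? = some s ∧ (prio s).idxOf i < q s

instance (P : I → List (Option S)) (prio : S → List I) (q : S → ℕ) (i : I) (s : S) :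
    Decidable (GuaranteedFirstChoice P prio q i s) :=
  inferInstanceAs (Decidable (_ ∧ _))

/-- School `s` is competitive: at least `q s` students are guaranteed their first
choice `s`. -/
def Competitive (P : I → List (Option S)) (prio : S → List I) (q : S → ℕ) (s : S) : Prop :=
  q s ≤ (Finset.univ.filter (fun i => GuaranteedFirstChoice P prio q i s)).card

instance (P : I → List (Option S)) (prio : S → List I) (q : S → ℕ) (s : S) :
    Decidable (Competitive P prio q s) :=
  inferInstanceAs (Decidable (_ ≤ _))

/-- `P'` is a Nash equilibrium of the game `(GS^ℓ, P)` with semi-sophisticated students: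
every student guaranteed her first choice reports truthfully; every other student reports
truthfully if she has at most `ℓ` acceptable schools or all her acceptable schools are
competitive, and otherwise lists as acceptable, in the order given by her true preference,
only her acceptable schools that are not competitive. -/
def SemiSophProfile (ℓ : ℕ) (P : I → List (Option S)) (prio : S → List I) (q : S → ℕ)
    (P' : I → List (Option S)) : Prop :=
  ∀ i : I,
    ((∃ s : S, GuaranteedFirstChoice P prio q i s) → P' i = P i) ∧
    (¬ (∃ s : S, GuaranteedFirstChoice P prio q i s) →
      (((acceptables (P i)).length ≤ ℓ ∨ ∀ s ∈ acceptables (P i), Competitive P prio q s) →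
          P' i = P i) ∧
      (¬ ((acceptables (P i)).length ≤ ℓ ∨
            ∀ s ∈ acceptables (P i), Competitive P prio q s) →
          acceptables (P' i) =
            (acceptables (P i)).filter (fun s => decide (¬ Competitive P prio q s))))

/-!
With a common priority order, deferred acceptance is serial dictatorship: students choose in
priority order, each taking the first school of her list that still has a free seat
. A student's outcome therefore depends only on her own report and on the reports of
higher-priority students, and against those the outcomes she can reach by some report are
exactly "no school" and "any school with a free seat": a one-school list already secures the
latter, so the constraint `k ≥ 1` never binds for a sophisticated student. Her best response
gives her the most preferred of these outcomes, which is what her unconstrained truthful report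
yields. Going down the priority order, every equilibrium therefore produces
`SD(P^k_N, P_M, ≻, q)`, and reporting only the school obtained there is an equilibrium.
-/

open Finset

lemma _root_.List.idxOf_le_of_find?_eq_some {α : Type*} [BEq α] [LawfulBEq α] {l : List α}
    {b : α → Bool} {a x : α} (ha : l.find? b = some a) (hx : x ∈ l) (hbx : b x = true) :
    l.idxOf a ≤ l.idxOf x := by
  obtain ⟨hba, as, bs, rfl, has⟩ := List.find?_eq_some_iff_append.1 ha
  have hnot : ∀ y ∈ as, b y = false := fun y hy => by simpa using has y hy
  have hxas : x ∉ as := fun h => by simp [hnot x h] at hbx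
  have haas : a ∉ as := fun h => by simp [hnot a h] at hba
  rw [List.idxOf_append_of_notMem hxas, List.idxOf_append_of_notMem haas,
    List.idxOf_cons_self]
  omega

lemma _root_.Function.isFixedPt_iterate_of_potential {α : Type*} {f : α → α} {x : α}
    (φ : α → ℕ) {B : ℕ} (hφ : ∀ y, f y ≠ y → φ y < φ (f y))
    (hB : ∀ n, φ (f^[n] x) ≤ B) :
    Function.IsFixedPt f (f^[B + 1] x) := by
  by_contra hne
  have hmoving : ∀ n ≤ B + 1, f (f^[n] x) ≠ f^[n] x := by
    intro n hn hfix
    apply hne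
    rw [← Nat.sub_add_cancel hn, Function.iterate_add_apply, Function.iterate_fixed hfix]
    exact hfix
  have hgrow : ∀ n ≤ B + 2, n ≤ φ (f^[n] x) := by
    intro n
    induction n with
    | zero => simp
    | succ n ih =>
      intro hn
      have := hφ _ (hmoving n (by omega))
      rw [Function.iterate_succ_apply']
      have := ih (by omega)
      omega
  have := hgrow (B + 2) le_rfl
  have := hB (B + 2)
  omega

section Counting

variable {α : Type*} [Fintype α] [DecidableEq α] {l : List α}

lemma _root_.List.idxOf_filter_eq_card (hl : l.Nodup) (hcm : ∀ a, a ∈ l) {p : α → Bool}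
    {a : α} (ha : p a = true) :
    (l.filter p).idxOf a = #{b | l.idxOf b < l.idxOf a ∧ p b = true} := by
  set m := l.idxOf a
  have hm : m < l.length := List.idxOf_lt_length_of_mem (hcm a)
  have hdrop : l.drop m = a :: l.drop (m + 1) := by
    rw [List.drop_eq_getElem_cons hm, List.getElem_idxOf]
  have hnot : a ∉ l.take m := by
    rw [List.mem_take_iff_idxOf_lt (hcm a)]
    exact lt_irrefl _
  have hcard : #{b | l.idxOf b < m ∧ p b = true} = ((l.take m).filter p).length := by
    rw [← List.toFinset_card_of_nodup ((hl.sublist (List.take_sublist _ _)).filter p)]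
    congr 1
    ext b
    simp [List.mem_take_iff_idxOf_lt (hcm b)]
  conv_lhs => rw [← List.take_append_drop m l]
  rw [hcard, List.filter_append, hdrop, List.filter_cons_of_pos ha,
    List.idxOf_append_of_notMem fun h => hnot (List.mem_of_mem_filter h), List.idxOf_cons_self,
    add_zero]

lemma _root_.List.mem_take_filter_iff (hl : l.Nodup) (hcm : ∀ a, a ∈ l) {p : α → Bool}
    {a : α} (ha : p a = true) (n : ℕ) :
    a ∈ (l.filter p).take n ↔ #{b | l.idxOf b < l.idxOf a ∧ p b = true} < n := by
  rw [List.mem_take_iff_idxOf_lt (List.mem_filter.2 ⟨hcm a, ha⟩),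
    List.idxOf_filter_eq_card hl hcm ha]

end Counting

section Preferences

variable {S : Type*}

lemma acceptables_map_some_append_none (L : List S) (r : List (Option S)) :
    acceptables (L.map some ++ none :: r) = L := by
  induction L with
  | nil => simp [acceptables]
  | cons s L ih => simp_all [acceptables]

lemma acceptables_truncate [DecidableEq S] (p : List (Option S)) (k : ℕ) :
    acceptables (truncate p k) = (acceptables p).take k :=
  acceptables_map_some_append_none _ _

lemma map_some_acceptables (p : List (Option S)) :
    (acceptables p).map some = p.takeWhile Option.isSome := by
  induction p with
  | nil => rfl
  | cons x p ih => cases x <;> simp_all [acceptables]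

lemma acceptables_nodup {p : List (Option S)} (hp : p.Nodup) : (acceptables p).Nodup := by
  have h := (List.takeWhile_sublist Option.isSome).nodup hp
  rw [← map_some_acceptables] at h
  exact h.of_map some

lemma acceptables_truncate_nodup [DecidableEq S] {p : List (Option S)} (hp : p.Nodup) (k : ℕ) :
    (acceptables (truncate p k)).Nodup := by
  rw [acceptables_truncate]
  exact (List.take_sublist _ _).nodup (acceptables_nodup hp)

lemma exists_eq_map_some_acceptables_append_none {p : List (Option S)} (hp : none ∈ p) :
    ∃ r, p = (acceptables p).map some ++ none :: r := by
  have hne : p.dropWhile Option.isSome ≠ [] := by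
    rw [Ne, List.dropWhile_eq_nil_iff]
    exact fun h => by simpa using h none hp
  obtain ⟨x, r, hxr⟩ := List.exists_cons_of_ne_nil hne
  have hx : x = none := by
    simpa [hxr] using List.head_dropWhile_not Option.isSome hne
  refine ⟨r, ?_⟩
  rw [map_some_acceptables, ← hx, ← hxr, List.takeWhile_append_dropWhile]

variable [DecidableEq S] {p : List (Option S)}

lemma idxOf_map_some (L : List S) (s : S) : (L.map some).idxOf (some s) = L.idxOf s := by
  simp [List.idxOf, List.findIdx_map, Function.comp_def]

lemma idxOf_some_of_mem_acceptables {s : S} (hs : s ∈ acceptables p) :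
    p.idxOf (some s) = (acceptables p).idxOf s := by
  conv_lhs => rw [← List.takeWhile_append_dropWhile (p := Option.isSome) (l := p),
    ← map_some_acceptables]
  rw [List.idxOf_append_of_mem (List.mem_map_of_mem hs), idxOf_map_some]

lemma prefLt_some_none {s : S} (hp : none ∈ p) (hs : s ∈ acceptables p) :
    prefLt p (some s) none := by
  obtain ⟨r, hr⟩ := exists_eq_map_some_acceptables_append_none hp
  unfold prefLt
  rw [hr, List.idxOf_append_of_mem (List.mem_map_of_mem hs),
    List.idxOf_append_of_notMem (by simp), idxOf_map_some, List.idxOf_cons_self,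
    List.length_map]
  exact List.idxOf_lt_length_of_mem hs

lemma prefLt_none_some {s : S} (hp : none ∈ p) (hs : s ∉ acceptables p) :
    prefLt p none (some s) := by
  obtain ⟨r, hr⟩ := exists_eq_map_some_acceptables_append_none hp
  unfold prefLt
  rw [hr, List.idxOf_append_of_notMem (by simp), List.idxOf_append_of_notMem (by simpa),
    List.idxOf_cons_self, List.idxOf_cons_ne _ (by simp)]
  omega

lemma not_prefLt_find?_acceptables (hp : none ∈ p) (b : S → Bool) (L : List S) :
    ¬ prefLt p (L.find? b) ((acceptables p).find? b) := by
  intro hlt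
  cases hbest : (acceptables p).find? b with
  | none =>
    rw [hbest] at hlt
    cases hL : L.find? b with
    | none => simp [hL, prefLt] at hlt
    | some s =>
      have hs : s ∉ acceptables p := fun hs =>
        List.find?_eq_none.1 hbest s hs (List.find?_some hL)
      rw [hL] at hlt
      exact absurd hlt (prefLt_none_some hp hs).asymm
  | some t =>
    have ht := List.mem_of_find?_eq_some hbest
    rw [hbest] at hlt
    cases hL : L.find? b with
    | none =>
      rw [hL] at hlt
      exact (prefLt_some_none hp ht).asymm hlt
    | some s =>
      rw [hL] at hlt
      by_cases hs : s ∈ acceptables p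
      · have := List.idxOf_le_of_find?_eq_some hbest hs (List.find?_some hL)
        rw [prefLt, idxOf_some_of_mem_acceptables hs, idxOf_some_of_mem_acceptables ht] at hlt
        omega
      · exact ((prefLt_some_none hp ht).trans (prefLt_none_some hp hs)).asymm hlt

lemma find?_acceptables_eq_of_not_prefLt (hp : none ∈ p) {b : S → Bool} {o : Option S}
    (ho : ∀ s, o = some s → b s = true) (hnone : ¬ prefLt p none o)
    (hsome : ∀ s, b s = true → ¬ prefLt p (some s) o) :
    (acceptables p).find? b = o := by
  cases hbest : (acceptables p).find? b with
  | none =>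
    cases o with
    | none => rfl
    | some s =>
      have hs : s ∉ acceptables p := fun hs => List.find?_eq_none.1 hbest s hs (ho s rfl)
      exact absurd (prefLt_none_some hp hs) hnone
  | some t =>
    have ht := List.mem_of_find?_eq_some hbest
    have hnlt := hsome t (List.find?_some hbest)
    cases o with
    | none => exact absurd (prefLt_some_none hp ht) hnlt
    | some s =>
      by_cases hs : s ∈ acceptables p
      · have hle := List.idxOf_le_of_find?_eq_some hbest hs (ho s rfl)
        rw [prefLt, idxOf_some_of_mem_acceptables hs, idxOf_some_of_mem_acceptables ht] at hnlt
        rw [(List.idxOf_inj (y := s) ht).1 (by omega)]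
      · exact absurd ((prefLt_some_none hp ht).trans (prefLt_none_some hp hs)) hnlt

end Preferences

section SerialDictatorship

variable {I S : Type*} [Fintype I] [DecidableEq I] [DecidableEq S]

def vacant (pr : List I) (q : S → ℕ) (μ : I → Option S) (i : I) (s : S) : Bool :=
  decide (#{j | pr.idxOf j < pr.idxOf i ∧ μ j = some s} < q s)

/-- Serial dictatorship along `pr`. Masking the students not ranked above `i` makes the recursion
well founded; `SD_apply` is the unmasked equation. -/
def SD (R : I → List (Option S)) (pr : List I) (q : S → ℕ) (i : I) : Option S :=
  (acceptables (R i)).find?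
    (vacant pr q (fun j => if pr.idxOf j < pr.idxOf i then SD R pr q j else none) i)
termination_by pr.idxOf i

variable {R R₁ R₂ : I → List (Option S)} {pr : List I} {q : S → ℕ}
  {μ ν : I → Option S}

lemma vacant_congr {i : I} (h : ∀ j, pr.idxOf j < pr.idxOf i → μ j = ν j) :
    vacant pr q μ i = vacant pr q ν i := by
  funext s
  unfold vacant
  congr 3
  ext j
  simp only [Finset.mem_filter, Finset.mem_univ, true_and, and_congr_right_iff]
  intro hj
  rw [h j hj]

lemma SD_apply (i : I) :
    SD R pr q i = (acceptables (R i)).find? (vacant pr q (SD R pr q) i) := by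
  rw [SD]
  congr 1
  exact vacant_congr fun j hj => if_pos hj

lemma SD_congr {i : I}
    (H : ∀ j, pr.idxOf j ≤ pr.idxOf i →
      (acceptables (R₁ j)).find? (vacant pr q (SD R₁ pr q) j) =
        (acceptables (R₂ j)).find? (vacant pr q (SD R₁ pr q) j)) :
    SD R₁ pr q i = SD R₂ pr q i := by
  induction hn : pr.idxOf i using Nat.strong_induction_on generalizing i with
  | _ n ih =>
  rw [SD_apply, SD_apply, H i le_rfl]
  congr 1
  exact vacant_congr fun j hj =>
    ih _ (hn ▸ hj) (fun j' hj' => H j' (by omega)) rfl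

lemma SD_update_self (i : I) (L : List (Option S)) :
    SD (Function.update R i L) pr q i = (acceptables L).find? (vacant pr q (SD R pr q) i) := by
  rw [SD_apply, Function.update_self]
  congr 1
  refine vacant_congr fun j hj => SD_congr fun j' hj' => ?_
  rw [Function.update_of_ne (by rintro rfl; omega)]

/-- The position in `i`'s list of the school `SD` assigns her (the length of the list if none):
the state at which deferred acceptance stops. -/
def rankSD (R : I → List (Option S)) (pr : List I) (q : S → ℕ) (i : I) : ℕ :=
  (acceptables (R i)).findIdx (vacant pr q (SD R pr q) i)

lemma getElem?_rankSD (i : I) : (acceptables (R i))[rankSD R pr q i]? = SD R pr q i := by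
  rw [rankSD, ← List.find?_eq_getElem?_findIdx, SD_apply]

lemma rankSD_le_length (i : I) : rankSD R pr q i ≤ (acceptables (R i)).length :=
  List.findIdx_le_length

lemma vacant_of_lt_rankSD {i : I} {m : ℕ} (hm : m < rankSD R pr q i)
    (hlen : m < (acceptables (R i)).length) :
    vacant pr q (SD R pr q) i (acceptables (R i))[m] = false :=
  List.not_of_lt_findIdx hm

lemma find?_toList_SD (i : I) :
    (SD R pr q i).toList.find? (vacant pr q (SD R pr q) i) = SD R pr q i := by
  cases h : SD R pr q i with
  | none => rfl
  | some s =>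
    rw [SD_apply] at h
    exact List.find?_cons_of_pos (List.find?_some h)

lemma vacant_anti {i j : I} (hji : pr.idxOf j < pr.idxOf i) {s : S}
    (h : vacant pr q μ i s = true) : vacant pr q μ j s = true := by
  simp only [vacant, decide_eq_true_eq] at h ⊢
  refine lt_of_le_of_lt (Finset.card_le_card fun x hx => ?_) h
  simp only [Finset.mem_filter, Finset.mem_univ, true_and] at hx ⊢
  exact ⟨hx.1.trans hji, hx.2⟩

end SerialDictatorship

section DeferredAcceptance

variable {I S : Type*} [DecidableEq I] [DecidableEq S]
  {R : I → List (Option S)} {prio : S → List I} {q : S → ℕ} {σ : I → ℕ}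

lemma le_daStep (i : I) : σ i ≤ daStep R prio q σ i := by
  unfold daStep
  split
  · exact le_rfl
  · split_ifs <;> omega

lemma mem_daHeld_of_daStep_eq {i : I} {s : S} (hfix : daStep R prio q σ i = σ i)
    (ht : daTarget R σ i = some s) : i ∈ daHeld R prio q σ s := by
  simp only [daStep, ht] at hfix
  by_contra hrej
  rw [if_neg hrej] at hfix
  omega

variable [Fintype I] {pr : List I}

lemma mem_daHeld_iff (hnd : pr.Nodup) (hcm : ∀ i, i ∈ pr) {s : S} (hpr : prio s = pr) {i : I}
    (ht : daTarget R σ i = some s) :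
    i ∈ daHeld R prio q σ s ↔
      #{j | pr.idxOf j < pr.idxOf i ∧ daTarget R σ j = some s} < q s := by
  rw [daHeld, hpr, List.mem_take_filter_iff hnd hcm (by simpa using ht)]
  simp

lemma sum_lt_sum_daStep {σ : I → ℕ} (h : daStep R prio q σ ≠ σ) :
    ∑ i, σ i < ∑ i, daStep R prio q σ i := by
  obtain ⟨i, hi⟩ := Function.ne_iff.1 h
  exact Finset.sum_lt_sum (fun j _ => le_daStep j)
    ⟨i, Finset.mem_univ i, (le_daStep i).lt_of_ne' hi⟩

lemma SD_eq_or_not_vacant_of_daTarget {j : I} {s : S} (hσ : σ j ≤ rankSD R pr q j)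
    (ht : daTarget R σ j = some s) :
    SD R pr q j = some s ∨ vacant pr q (SD R pr q) j s = false := by
  obtain ⟨hlen, hget⟩ := List.getElem?_eq_some_iff.1 ht
  rcases hσ.lt_or_eq with hlt | heq
  · exact Or.inr (hget ▸ vacant_of_lt_rankSD hlt hlen)
  · rw [← getElem?_rankSD, ← heq]
    exact Or.inl ht

/-- A student is never rejected by her `SD` school: every higher-priority applicant there is also
placed there by `SD`, since otherwise that school would have no seat left for her either. -/
lemma daStep_le_rankSD (hnd : pr.Nodup) (hcm : ∀ i, i ∈ pr) (hpr : ∀ s, prio s = pr)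
    (hσ : ∀ j, σ j ≤ rankSD R pr q j) (i : I) : daStep R prio q σ i ≤ rankSD R pr q i := by
  unfold daStep
  split
  · exact hσ i
  next s ht =>
  split_ifs with hheld
  · exact hσ i
  refine lt_of_le_of_ne (hσ i) fun heq => hheld ?_
  have hSD : SD R pr q i = some s := by rw [← getElem?_rankSD, ← heq]; exact ht
  have hvac : vacant pr q (SD R pr q) i s = true := by
    rw [SD_apply] at hSD
    exact List.find?_some hSD
  rw [mem_daHeld_iff hnd hcm (hpr s) ht]
  refine lt_of_le_of_lt (Finset.card_le_card fun j hj => ?_) (by simpa [vacant] using hvac)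
  simp only [Finset.mem_filter, Finset.mem_univ, true_and] at hj ⊢
  refine ⟨hj.1, (SD_eq_or_not_vacant_of_daTarget (hσ j) hj.2).resolve_right ?_⟩
  simp [vacant_anti hj.1 hvac]

lemma eq_rankSD_of_daStep_eq (hnd : pr.Nodup) (hcm : ∀ i, i ∈ pr) (hpr : ∀ s, prio s = pr)
    (hσ : ∀ j, σ j ≤ rankSD R pr q j) (hfix : daStep R prio q σ = σ) :
    σ = rankSD R pr q := by
  funext i
  induction hn : pr.idxOf i using Nat.strong_induction_on generalizing i with
  | _ n ih =>
  refine (hσ i).eq_of_not_lt fun hlt => ?_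
  have hlen := hlt.trans_le (rankSD_le_length i)
  set s := (acceptables (R i))[σ i]
  have ht : daTarget R σ i = some s := List.getElem?_eq_getElem hlen
  have hheld := (mem_daHeld_iff hnd hcm (hpr s) ht).1
    (mem_daHeld_of_daStep_eq (congrFun hfix i) ht)
  have hfull := vacant_of_lt_rankSD hlt hlen
  simp only [vacant, decide_eq_false_iff_not, not_lt] at hfull
  refine absurd (hfull.trans (Finset.card_le_card fun j hj => ?_)) (not_le.2 hheld)
  simp only [Finset.mem_filter, Finset.mem_univ, true_and] at hj ⊢
  refine ⟨hj.1, ?_⟩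
  rw [daTarget, ih _ (hn ▸ hj.1) j rfl, getElem?_rankSD, hj.2]

end DeferredAcceptance

section GaleShapley

variable {I S : Type*} [Fintype I] [DecidableEq I] [Fintype S] [DecidableEq S]
  {R : I → List (Option S)} {prio : S → List I} {pr : List I} {q : S → ℕ}

lemma GS_eq_SD (hnd : pr.Nodup) (hcm : ∀ i, i ∈ pr) (hpr : ∀ s, prio s = pr)
    (hR : ∀ i, (acceptables (R i)).Nodup) : GS R prio q = SD R pr q := by
  have hle : ∀ n i, (daStep R prio q)^[n] (fun _ => 0) i ≤ rankSD R pr q i := by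
    intro n
    induction n with
    | zero => simp
    | succ n ih =>
      rw [Function.iterate_succ_apply']
      exact daStep_le_rankSD hnd hcm hpr ih
  -- Each round that changes the state adds a rejection, and there are at most `|I| * |S|`.
  have hfix := Function.isFixedPt_iterate_of_potential (fun σ : I → ℕ => ∑ i, σ i)
    (f := daStep R prio q) (x := fun _ => 0) (B := Fintype.card I * Fintype.card S)
    (fun σ => sum_lt_sum_daStep) fun n => by
      calc ∑ i, _ ≤ ∑ _i : I, Fintype.card S := Finset.sum_le_sum fun i _ =>
            ((hle n i).trans (rankSD_le_length i)).trans (hR i).length_le_card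
        _ = Fintype.card I * Fintype.card S := by simp
  have hrank := eq_rankSD_of_daStep_eq hnd hcm hpr (hle _) hfix
  funext i
  have htarget : daTarget R (rankSD R pr q) i = SD R pr q i := getElem?_rankSD i
  simp only [GS, hrank, htarget]
  cases hSD : SD R pr q i with
  | none => rfl
  | some s =>
    refine if_pos ?_
    exact mem_daHeld_of_daStep_eq (congrFun (hrank ▸ hfix) i) (htarget.trans hSD)

end GaleShapley

lemma exists_validPrio_forall_eq {I S : Type*} [Fintype I] {prio : S → List I}
    (hprio : ∀ s, ValidPrio (prio s)) (hcp : ∀ s s', prio s = prio s') :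
    ∃ pr, ValidPrio pr ∧ ∀ s, prio s = pr := by
  cases isEmpty_or_nonempty S with
  | inl _ => exact ⟨Finset.univ.toList, ⟨Finset.nodup_toList _, by simp⟩, isEmptyElim⟩
  | inr h => exact ⟨prio h.some, hprio _, fun s => hcp s _⟩

section Game

variable {I S : Type*} [Fintype I] [DecidableEq I] [Fintype S] [DecidableEq S]
  {k : ℕ} {M : Finset I} {P P' R : I → List (Option S)} {prio : S → List I} {pr : List I}
  {q : S → ℕ}

noncomputable def prefOfAcceptables (L : List S) : List (Option S) :=
  L.map some ++ none ::
    (Finset.univ : Finset (Option S)).toList.filter fun x => x ≠ none ∧ x ∉ L.map some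

lemma acceptables_prefOfAcceptables (L : List S) : acceptables (prefOfAcceptables L) = L :=
  acceptables_map_some_append_none _ _

lemma validPref_prefOfAcceptables {L : List S} (hL : L.Nodup) :
    ValidPref (prefOfAcceptables L) := by
  refine ⟨?_, fun x => ?_⟩
  · rw [prefOfAcceptables, List.nodup_append, List.nodup_cons]
    refine ⟨hL.map (Option.some_injective S), ⟨by simp, (Finset.nodup_toList _).filter _⟩,
      ?_⟩
    simpa using fun s hs _ _ h => h s hs
  · rcases x with _ | s
    · simp [prefOfAcceptables]
    · by_cases hs : s ∈ L
      · simp [prefOfAcceptables, hs]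
      · simpa [prefOfAcceptables, hs] using fun t ht (h : t = s) => hs (h ▸ ht)

lemma GSk_eq_SD (hnd : pr.Nodup) (hcm : ∀ i, i ∈ pr) (hpr : ∀ s, prio s = pr)
    (hR : ∀ i, (R i).Nodup) : GSk k R prio q = SD (fun i => truncate (R i) k) pr q :=
  GS_eq_SD hnd hcm hpr fun i => acceptables_truncate_nodup (hR i) k

lemma GSk_update_self (hnd : pr.Nodup) (hcm : ∀ i, i ∈ pr) (hpr : ∀ s, prio s = pr)
    (hR : ∀ i, (R i).Nodup) {Q : List (Option S)} (hQ : Q.Nodup) (i : I) :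
    GSk k (Function.update R i Q) prio q i =
      (acceptables (truncate Q k)).find? (vacant pr q (SD (fun j => truncate (R j) k) pr q) i) := by
  have hRQ : ∀ j, (Function.update R i Q j).Nodup :=
    (Function.forall_update_iff R fun _ p => p.Nodup).2 ⟨hQ, fun j _ => hR j⟩
  have htrunc : (fun j => truncate (Function.update R i Q j) k) =
      Function.update (fun j => truncate (R j) k) i (truncate Q k) :=
    funext (Function.apply_update (fun _ p => truncate p k) R i Q)
  rw [GSk_eq_SD hnd hcm hpr hRQ, htrunc, SD_update_self]

lemma SD_truncate_eq_of_nashEq (hk : 1 ≤ k) (hnd : pr.Nodup) (hcm : ∀ i, i ∈ pr)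
    (hpr : ∀ s, prio s = pr) (hP : ∀ i, ValidPref (P i))
    (hNE : NashEq (fun R => GSk k R prio q) P M P') :
    SD (fun i => truncate (P' i) k) pr q =
      SD (fun i => if i ∈ M then P i else truncate (P i) k) pr q := by
  obtain ⟨hvalid, hsincere, hbest⟩ := hNE
  have hnd' : ∀ i, (P' i).Nodup := fun i => (hvalid i).1
  funext i
  refine SD_congr fun j _ => ?_
  by_cases hj : j ∈ M
  swap
  · simp [hsincere j hj, hj]
  rw [if_pos hj, ← SD_apply]
  set b := vacant pr q (SD (fun i => truncate (P' i) k) pr q) j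
  have hdev : ∀ L : List S, L.Nodup → L.length ≤ k →
      ¬ prefLt (P j) (L.find? b) (SD (fun i => truncate (P' i) k) pr q j) := by
    intro L hL hLk
    have := hbest j hj _ (validPref_prefOfAcceptables hL)
    dsimp only at this
    rwa [GSk_update_self hnd hcm hpr hnd' (validPref_prefOfAcceptables hL).1,
      acceptables_truncate, acceptables_prefOfAcceptables, List.take_of_length_le hLk,
      GSk_eq_SD hnd hcm hpr hnd'] at this
  refine (find?_acceptables_eq_of_not_prefLt ((hP j).2 none) (fun s hs => ?_)
    (hdev [] (by simp) (by simp)) fun s hs => ?_).symm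
  · rw [SD_apply] at hs
    exact List.find?_some hs
  · simpa [hs] using hdev [s] (by simp) (by simpa using hk)

lemma nashEq_prefOfAcceptables_SD (hk : 1 ≤ k) (hnd : pr.Nodup) (hcm : ∀ i, i ∈ pr)
    (hpr : ∀ s, prio s = pr) (hP : ∀ i, ValidPref (P i)) :
    NashEq (fun R => GSk k R prio q) P M fun i => if i ∈ M then
      prefOfAcceptables (SD (fun j => if j ∈ M then P j else truncate (P j) k) pr q i).toList
      else P i := by
  set R₀ := fun i => if i ∈ M then P i else truncate (P i) k
  set P'' := fun i => if i ∈ M then prefOfAcceptables (SD R₀ pr q i).toList else P i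
  have hvalid : ∀ i, ValidPref (P'' i) := by
    intro i
    by_cases hi : i ∈ M
    · simpa [P'', hi] using validPref_prefOfAcceptables (SD R₀ pr q i).toList_nodup
    · simpa [P'', hi] using hP i
  have hnd'' : ∀ i, (P'' i).Nodup := fun i => (hvalid i).1
  have hSD : SD (fun i => truncate (P'' i) k) pr q = SD R₀ pr q := by
    funext i
    refine (SD_congr fun j _ => ?_).symm
    by_cases hj : j ∈ M
    · have hP''j : P'' j = prefOfAcceptables (SD R₀ pr q j).toList := if_pos hj
      rw [← SD_apply, hP''j, acceptables_truncate, acceptables_prefOfAcceptables,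
        List.take_of_length_le (Option.length_toList_le.trans hk), find?_toList_SD]
    · simp [R₀, P'', hj]
  refine ⟨hvalid, fun i hi => if_neg hi, fun i hi Q hQ => ?_⟩
  dsimp only
  rw [GSk_update_self hnd hcm hpr hnd'' hQ.1, GSk_eq_SD hnd hcm hpr hnd'', hSD, SD_apply (i := i),
    show R₀ i = P i from if_pos hi]
  exact not_prefLt_find?_acceptables ((hP i).2 none) _ _

end Game

theorem sdk_unique_nash_equilibrium_outcome_general
    {I S : Type*} [Fintype I] [DecidableEq I] [Fintype S] [DecidableEq S]
    (k : ℕ) (hk : 1 < k) (M : Finset I)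
    (P : I → List (Option S)) (prio : S → List I) (q : S → ℕ)
    (hP : ∀ i, ValidPref (P i)) (hprio : ∀ s, ValidPrio (prio s))
    (hcp : ∀ s s' : S, prio s = prio s') :
    (∀ P' : I → List (Option S),
        NashEq (fun R => GSk k R prio q) P M P' →
        GSk k P' prio q = GS (fun i => if i ∈ M then P i else truncate (P i) k) prio q) ∧
    (∃ P' : I → List (Option S), NashEq (fun R => GSk k R prio q) P M P') := by
  obtain ⟨pr, ⟨hnd, hcm⟩, hpr⟩ := exists_validPrio_forall_eq hprio hcp
  refine ⟨fun P' hNE => ?_, ⟨_, nashEq_prefOfAcceptables_SD hk.le hnd hcm hpr hP⟩⟩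
  have hR : ∀ i, (acceptables (if i ∈ M then P i else truncate (P i) k)).Nodup := by
    intro i
    split_ifs
    · exact acceptables_nodup (hP i).1
    · exact acceptables_truncate_nodup (hP i).1 k
  rw [GSk_eq_SD hnd hcm hpr fun i => (hNE.1 i).1,
    SD_truncate_eq_of_nashEq hk.le hnd hcm hpr hP hNE, GS_eq_SD hnd hcm hpr hR]

/-- Lemma on SD with sincere and sophisticated students: for `k > 1`
and a common priority, the game `(SD^k, P)` with sincere students (the complement of `M`,
reporting truthfully) and sophisticated students `M` has a unique Nash equilibrium
outcome, namely `SD(P^k_N, P_M, ≻, q)`, and a Nash equilibrium exists. -/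
theorem sdk_unique_nash_equilibrium_outcome
    {I S : Type*} [Fintype I] [DecidableEq I] [Fintype S] [DecidableEq S]
    (hIS : Fintype.card S < Fintype.card I)
    (k : ℕ) (hk : 1 < k) (M : Finset I)
    (P : I → List (Option S)) (prio : S → List I) (q : S → ℕ)
    (hP : ∀ i, ValidPref (P i)) (hprio : ∀ s, ValidPrio (prio s))
    (hcp : ∀ s s' : S, prio s = prio s') :
    (∀ P' : I → List (Option S),
        NashEq (fun R => GSk k R prio q) P M P' →
        GSk k P' prio q = GS (fun i => if i ∈ M then P i else truncate (P i) k) prio q) ∧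
    (∃ P' : I → List (Option S), NashEq (fun R => GSk k R prio q) P M P') :=
  sdk_unique_nash_equilibrium_outcome_general k hk M P prio q hP hprio hcp

end SchoolChoice
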